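/- Let Γ be the subgroup of SU(2) generated by a = !![ζ, 0; 0, conj ζ] (where ζ = exp(πi/3)) and b = !![0, i; i, 0]. Then the center of Γ is the two-element subgroup {1, a^3} (where a^3 = -1, the negative of the identity matrix), and the quotient of Γ by its center is isomorphic to the dihedral group D₃ of order 6, i.e. to DihedralGroup 3. (This identifies the stabilizer of the point [1,0,0,1] ∈ ℂP³ for the induced effective SO(3)-action as the dihedral group D₃.) -/

import Mathlib

open Matrix

/-- The special unitary group is a group (inverse given by conjugate transpose). -/
noncomputable instance specialUnitaryGroup.instGroup (n : Type*) [DecidableEq n] [Fintype n] :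
    Group (Matrix.specialUnitaryGroup n ℂ) where
  inv A := ⟨star A.1, by
    obtain ⟨hu, hd⟩ := (Matrix.mem_specialUnitaryGroup_iff).mp A.2
    refine (Matrix.mem_specialUnitaryGroup_iff).mpr ⟨Unitary.star_mem hu, ?_⟩
    rw [Matrix.star_eq_conjTranspose, Matrix.det_conjTranspose, hd]
    simp⟩
  inv_mul_cancel A := by
    ext1
    exact ((Matrix.mem_specialUnitaryGroup_iff).mp A.2).1.1

/-- ζ = exp(πi/3) -/
noncomputable def zeta : ℂ := Complex.exp ((Real.pi : ℂ) * Complex.I / 3)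

/-- The matrix a = !![ζ, 0; 0, conj ζ]. -/
noncomputable def aMat : Matrix (Fin 2) (Fin 2) ℂ := !![zeta, 0; 0, (starRingEnd ℂ) zeta]

/-- The matrix b = !![0, i; i, 0]. -/
def bMat : Matrix (Fin 2) (Fin 2) ℂ := !![0, Complex.I; Complex.I, 0]

lemma zeta_pow_three : zeta ^ 3 = -1 := by
  rw [zeta, ← Complex.exp_nat_mul]
  rw [show (3:ℕ) * ((Real.pi : ℂ) * Complex.I / 3) = Real.pi * Complex.I by ring]
  exact Complex.exp_pi_mul_I

lemma zeta_mul_conj : zeta * (starRingEnd ℂ) zeta = 1 := by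
  rw [zeta, ← Complex.exp_conj]
  rw [← Complex.exp_add]
  rw [show ((Real.pi : ℂ) * Complex.I / 3 + (starRingEnd ℂ) ((Real.pi : ℂ) * Complex.I / 3)) = 0 by
    simp [map_div₀, Complex.conj_I, map_ofNat]; ring]
  exact Complex.exp_zero

lemma zeta_im_pos : 0 < zeta.im := by
  rw [zeta, show (Real.pi : ℂ) * Complex.I / 3 = ((Real.pi/3 : ℝ) : ℂ) * Complex.I by push_cast; ring,
    Complex.exp_ofReal_mul_I_im]
  exact Real.sin_pos_of_pos_of_lt_pi (by positivity) (by linarith [Real.pi_pos])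

lemma zeta_sq_im_pos : 0 < (zeta^2).im := by
  rw [zeta, ← Complex.exp_nat_mul,
    show (2:ℕ) * ((Real.pi : ℂ) * Complex.I / 3) = ((2*Real.pi/3 : ℝ) : ℂ) * Complex.I by push_cast; ring,
    Complex.exp_ofReal_mul_I_im]
  exact Real.sin_pos_of_pos_of_lt_pi (by positivity) (by linarith [Real.pi_pos])

lemma aMat_pow_three : aMat ^ 3 = -1 := by
  have h1 : ((starRingEnd ℂ) zeta)^3 = -1 := by
    rw [← map_pow, zeta_pow_three]; simp
  rw [aMat, pow_succ, pow_two, Matrix.mul_fin_two, Matrix.mul_fin_two]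
  ext i j
  fin_cases i <;> fin_cases j <;>
    simp [← pow_two, ← pow_succ, zeta_pow_three, h1, Matrix.one_apply]

lemma ha : aMat ∈ Matrix.specialUnitaryGroup (Fin 2) ℂ := by
  rw [Matrix.mem_specialUnitaryGroup_iff]
  constructor
  · constructor <;>
    · ext i j
      fin_cases i <;> fin_cases j <;>
        simp [aMat, Matrix.mul_apply, Fin.sum_univ_succ, Matrix.conjTranspose_apply,
          Matrix.one_apply, mul_comm, zeta_mul_conj]
  · simp [aMat, Matrix.det_fin_two_of, zeta_mul_conj]

lemma hb : bMat ∈ Matrix.specialUnitaryGroup (Fin 2) ℂ := by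
  rw [Matrix.mem_specialUnitaryGroup_iff]
  constructor
  · constructor <;>
    · ext i j
      fin_cases i <;> fin_cases j <;>
        simp [bMat, Matrix.mul_apply, Fin.sum_univ_succ, Matrix.conjTranspose_apply,
          Matrix.one_apply, Complex.conj_I]
  · simp [bMat, Matrix.det_fin_two_of, Complex.I_mul_I]

abbrev SU2 := Matrix.specialUnitaryGroup (Fin 2) ℂ

lemma zeta_pow_ne_one : ∀ k, 0 < k → k < 6 → zeta ^ k ≠ 1 := by
  have him := zeta_im_pos
  have him2 := zeta_sq_im_pos
  intro k hk hk6
  interval_cases k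
  · intro h; rw [pow_one] at h; rw [h] at him; simp at him
  · intro h; rw [h] at him2; simp at him2
  · rw [zeta_pow_three]; norm_num
  · intro h
    rw [show (4:ℕ) = 3+1 from rfl, pow_succ, zeta_pow_three] at h
    have h2 : zeta = -1 := by linear_combination -h
    rw [h2] at him; simp at him
  · intro h
    rw [show (5:ℕ) = 3+2 from rfl, pow_add, zeta_pow_three] at h
    have h2 : zeta^2 = -1 := by linear_combination -h
    rw [h2] at him2; simp at him2

lemma aMat_pow (k : ℕ) : aMat ^ k = !![zeta^k, 0; 0, ((starRingEnd ℂ) zeta)^k] := by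
  induction k with
  | zero => simp [Matrix.one_fin_two]
  | succ n ih =>
    rw [pow_succ, ih, aMat, Matrix.mul_fin_two]
    ext i j
    fin_cases i <;> fin_cases j <;> simp [pow_succ]

lemma bMat_mul_aMat_pow (k : ℕ) : bMat * aMat ^ k =
    !![0, Complex.I * ((starRingEnd ℂ) zeta)^k; Complex.I * zeta^k, 0] := by
  rw [aMat_pow, bMat, Matrix.mul_fin_two]
  ext i j
  fin_cases i <;> fin_cases j <;> simp

noncomputable def A : SU2 := ⟨aMat, ha⟩
noncomputable def B : SU2 := ⟨bMat, hb⟩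

lemma coeA_pow (k : ℕ) : ((A^k : SU2) : Matrix (Fin 2) (Fin 2) ℂ) = aMat ^ k :=
  SubmonoidClass.coe_pow _ _

lemma hA6 : A ^ 6 = 1 := by
  apply Subtype.ext
  rw [coeA_pow, show (6:ℕ) = 3+3 from rfl, pow_add, aMat_pow_three]
  simp

lemma hB2 : B ^ 2 = A ^ 3 := by
  apply Subtype.ext
  rw [SubmonoidClass.coe_pow, coeA_pow, aMat_pow_three]
  show bMat ^ 2 = -1
  rw [pow_two]
  rw [bMat, Matrix.mul_fin_two]
  ext i j
  fin_cases i <;> fin_cases j <;> simp [Complex.I_mul_I]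

lemma hAB : A * B = B * A ^ 5 := by
  apply Subtype.ext
  show aMat * bMat = bMat * aMat ^ 5
  rw [bMat_mul_aMat_pow]
  have hz5 : zeta ^ 5 = (starRingEnd ℂ) zeta := by
    have h6 : zeta ^ 6 = 1 := by
      rw [show (6:ℕ) = 3+3 from rfl, pow_add, zeta_pow_three]; norm_num
    have hne : zeta ≠ 0 := by
      intro h; rw [h] at h6; norm_num at h6
    apply mul_left_cancel₀ hne
    rw [← pow_succ', h6, zeta_mul_conj]
  have hz5c : ((starRingEnd ℂ) zeta) ^ 5 = zeta := by
    rw [← map_pow, hz5]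
    exact (Complex.conj_conj zeta)
  rw [aMat, bMat, Matrix.mul_fin_two, hz5, hz5c]
  ext i j
  fin_cases i <;> fin_cases j <;> simp [mul_comm]

lemma hA_mod (m n : ℕ) (h : (m : ZMod 6) = (n : ZMod 6)) : A ^ m = A ^ n := by
  have aux : ∀ k : ℕ, A ^ k = A ^ (k % 6) := by
    intro k
    conv_lhs => rw [← Nat.div_add_mod k 6]
    rw [pow_add, pow_mul, hA6, one_pow, one_mul]
  rw [aux m, aux n, (ZMod.natCast_eq_natCast_iff m n 6).mp h]

lemma hpow_comm (k : ℕ) : A ^ k * B = B * A ^ (5 * k) := by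
  induction k with
  | zero => simp
  | succ n ih =>
    rw [pow_succ, mul_assoc, hAB, ← mul_assoc, ih, mul_assoc, ← pow_add]
    have h5 : 5 * n + 5 = 5 * (n + 1) := by ring
    rw [h5]

lemma key (p q : ℕ) : (B * A ^ p) * (B * A ^ q) = A ^ (3 + 5 * p + q) := by
  simp only [← mul_assoc]
  rw [mul_assoc B (A ^ p) B, hpow_comm]
  simp only [← mul_assoc]
  rw [← pow_two, hB2, ← pow_add, ← pow_add]

lemma val_cast (i : ZMod 6) : ((i.val : ℕ) : ZMod 6) = i := ZMod.natCast_rightInverse i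

lemma five_eq : (5 : ZMod 6) = -1 := by decide

noncomputable def f : QuaternionGroup 3 → SU2
  | .a i => A ^ i.val
  | .xa i => B * A ^ i.val

lemma f_mul : ∀ x y : QuaternionGroup 3, f (x * y) = f x * f y := by
  rintro (i | i) (j | j)
  · rw [QuaternionGroup.a_mul_a]
    show A ^ _ = A ^ _ * A ^ _
    rw [← pow_add]
    exact hA_mod _ _ (by push_cast [val_cast]; ring)
  · rw [QuaternionGroup.a_mul_xa]
    show B * A ^ _ = A ^ i.val * (B * A ^ j.val)
    rw [← mul_assoc, hpow_comm, mul_assoc, ← pow_add]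
    congr 1
    exact hA_mod _ _ (by push_cast [val_cast, five_eq]; ring)
  · rw [QuaternionGroup.xa_mul_a]
    show B * A ^ _ = B * A ^ i.val * A ^ j.val
    rw [mul_assoc, ← pow_add]
    congr 1
    exact hA_mod _ _ (by push_cast [val_cast]; ring)
  · rw [QuaternionGroup.xa_mul_xa]
    show A ^ _ = (B * A ^ i.val) * (B * A ^ j.val)
    rw [key]
    exact hA_mod _ _ (by push_cast [val_cast, five_eq]; ring)

noncomputable def fHom : QuaternionGroup 3 →* SU2 := MonoidHom.mk' f f_mul

lemma f_inj : Function.Injective fHom := by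
  rw [injective_iff_map_eq_one]
  rintro (i | i) h
  · have h' : aMat ^ i.val = 1 := by
      have := congrArg Subtype.val h
      rwa [show ((fHom (QuaternionGroup.a i) : SU2) : Matrix (Fin 2) (Fin 2) ℂ)
        = aMat ^ i.val from (coeA_pow i.val)] at this
    rw [show (1 : QuaternionGroup 3) = QuaternionGroup.a 0 from rfl]
    congr 1
    rw [← ZMod.val_eq_zero]
    by_contra hv
    have hlt : i.val < 6 := ZMod.val_lt i
    have := congrArg (fun M : Matrix (Fin 2) (Fin 2) ℂ => M 0 0) h'
    simp only [aMat_pow, Matrix.one_apply] at this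
    exact zeta_pow_ne_one i.val (Nat.pos_of_ne_zero hv) hlt (by simpa using this)
  · exfalso
    have h' : bMat * aMat ^ i.val = 1 := by
      have := congrArg Subtype.val h
      rwa [show ((fHom (QuaternionGroup.xa i) : SU2) : Matrix (Fin 2) (Fin 2) ℂ)
        = bMat * aMat ^ i.val by rw [show fHom (QuaternionGroup.xa i) = B * A ^ i.val from rfl]
                                 rw [MulMemClass.coe_mul, coeA_pow]; rfl] at this
    have := congrArg (fun M : Matrix (Fin 2) (Fin 2) ℂ => M 0 0) h'
    simp [bMat_mul_aMat_pow, Matrix.one_apply] at this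

noncomputable def ΓG : Subgroup SU2 := Subgroup.closure {A, B}

lemma hAmem : A ∈ ΓG := Subgroup.subset_closure (Set.mem_insert _ _)
lemma hBmem : B ∈ ΓG := Subgroup.subset_closure (Set.mem_insert_of_mem _ rfl)

lemma range_eq : fHom.range = ΓG := by
  apply le_antisymm
  · rintro x ⟨q, rfl⟩
    cases q with
    | a i => exact pow_mem hAmem _
    | xa i => exact mul_mem hBmem (pow_mem hAmem _)
  · rw [ΓG]
    apply (Subgroup.closure_le _).mpr
    rintro x (rfl | rfl)
    · refine ⟨QuaternionGroup.a 1, ?_⟩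
      show A ^ (1 : ZMod 6).val = A
      rw [show (1 : ZMod 6).val = 1 from rfl, pow_one]
    · refine ⟨QuaternionGroup.xa 0, ?_⟩
      show B * A ^ (0 : ZMod 6).val = B
      simp

noncomputable def eQΓ : QuaternionGroup 3 ≃* ΓG :=
  (MonoidHom.ofInjective f_inj).trans (MulEquiv.subgroupCongr range_eq)

lemma eQΓ_coe (q : QuaternionGroup 3) : ((eQΓ q : ΓG) : SU2) = fHom q := rfl

lemma eQΓ_a1 : eQΓ (QuaternionGroup.a 1) = ⟨A, hAmem⟩ := by
  apply Subtype.ext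
  rw [eQΓ_coe]
  show A ^ (1 : ZMod 6).val = A
  rw [show (1 : ZMod 6).val = 1 from rfl, pow_one]

lemma map_center_mulEquiv {G H : Type*} [Group G] [Group H] (e : G ≃* H) :
    (Subgroup.center G).map e.toMonoidHom = Subgroup.center H := by
  ext z
  simp only [Subgroup.mem_map]
  constructor
  · rintro ⟨q, hq, rfl⟩
    rw [Subgroup.mem_center_iff] at hq ⊢
    intro g
    show g * e q = e q * g
    rw [← e.apply_symm_apply g, ← _root_.map_mul, ← _root_.map_mul, hq]
  · intro hz
    refine ⟨e.symm z, ?_, by simp⟩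
    rw [Subgroup.mem_center_iff] at hz ⊢
    intro g
    apply e.injective
    rw [_root_.map_mul, _root_.map_mul, e.apply_symm_apply, hz]

def piQD : QuaternionGroup 3 → DihedralGroup 3
  | .a i => .r (ZMod.castHom (show 3 ∣ 2*3 by norm_num) (ZMod 3) i)
  | .xa i => .sr (ZMod.castHom (show 3 ∣ 2*3 by norm_num) (ZMod 3) i)

lemma piQD_mul : ∀ x y : QuaternionGroup 3, piQD (x * y) = piQD x * piQD y := by decide

def piHom : QuaternionGroup 3 →* DihedralGroup 3 := MonoidHom.mk' piQD piQD_mul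

lemma piHom_surj : Function.Surjective piHom := by decide

lemma center_iff : ∀ z : QuaternionGroup 3,
    (∀ g, g * z = z * g) ↔ (z = 1 ∨ z = QuaternionGroup.a 1 ^ 3) := by decide

lemma ker_iff : ∀ z : QuaternionGroup 3, piHom z = 1 ↔ (∀ g, g * z = z * g) := by decide

lemma mem_center_Q (z : QuaternionGroup 3) :
    z ∈ Subgroup.center (QuaternionGroup 3) ↔ z = 1 ∨ z = QuaternionGroup.a 1 ^ 3 := by
  rw [Subgroup.mem_center_iff]; exact center_iff z

lemma ker_eq : piHom.ker = Subgroup.center (QuaternionGroup 3) := by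
  ext z; rw [MonoidHom.mem_ker, Subgroup.mem_center_iff]; exact ker_iff z

noncomputable def quotQ : (QuaternionGroup 3 ⧸ Subgroup.center (QuaternionGroup 3)) ≃* DihedralGroup 3 :=
  (QuotientGroup.quotientMulEquivOfEq ker_eq.symm).trans
    (QuotientGroup.quotientKerEquivOfSurjective piHom piHom_surj)

lemma center_set : (Subgroup.center ΓG : Set ΓG) = {1, (⟨A, hAmem⟩ : ΓG)^3} := by
  ext z
  simp only [Set.mem_insert_iff, Set.mem_singleton_iff, SetLike.mem_coe]
  rw [← map_center_mulEquiv eQΓ, Subgroup.mem_map]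
  constructor
  · rintro ⟨q, hq, rfl⟩
    rcases (mem_center_Q q).mp hq with rfl | rfl
    · left; simp
    · right; simp only [MulEquiv.coe_toMonoidHom, map_pow, eQΓ_a1]
  · rintro (rfl | rfl)
    · exact ⟨1, (mem_center_Q 1).mpr (Or.inl rfl), by simp⟩
    · exact ⟨QuaternionGroup.a 1 ^ 3, (mem_center_Q _).mpr (Or.inr rfl),
        by simp only [MulEquiv.coe_toMonoidHom, map_pow, eQΓ_a1]⟩

noncomputable def finalIso : (ΓG ⧸ Subgroup.center ΓG) ≃* DihedralGroup 3 :=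
  ((QuotientGroup.congr (Subgroup.center (QuaternionGroup 3)) (Subgroup.center ΓG) eQΓ
    (map_center_mulEquiv eQΓ)).symm).trans quotQ


/-- The center of Γ = ⟨a, b⟩ is {1, a³} (with a³ = -1), and Γ modulo its center
is isomorphic to the dihedral group D₃ of order 6. -/
theorem stmt5 :
    aMat ^ 3 = -1 ∧
    ∃ (ha : aMat ∈ Matrix.specialUnitaryGroup (Fin 2) ℂ)
      (hb : bMat ∈ Matrix.specialUnitaryGroup (Fin 2) ℂ),
      let Γ : Subgroup (Matrix.specialUnitaryGroup (Fin 2) ℂ) :=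
        Subgroup.closure {⟨aMat, ha⟩, ⟨bMat, hb⟩}
      let aΓ : Γ := ⟨⟨aMat, ha⟩, Subgroup.subset_closure (Set.mem_insert _ _)⟩
      ((Subgroup.center Γ : Set Γ) = {1, aΓ ^ 3}) ∧
      Nonempty ((Γ ⧸ Subgroup.center Γ) ≃* DihedralGroup 3) := by
  exact ⟨aMat_pow_three, ha, hb, center_set, ⟨finalIso⟩⟩
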